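/- arXiv:1204.1761 — 2 statements merged into one kernel-verified Lean document; each statement's English description precedes it below -/
import Mathlib

section
/- For any x ∈ ℝ and any a = (a₁, a₂, …) in the unit sphere of ℓ², letting a⁽ⁿ⁾ := (a₁, …, aₙ, 0, 0, …)/√(a₁² + ⋯ + aₙ²) (defined for all n large enough that a₁² + ⋯ + aₙ² > 0), one has liminf_{n→∞} P(a⁽ⁿ⁾·ε ≥ x) ≥ P(a·ε ≥ x). -/
/-!
Write `Tₙ = ∑_{i<n} aᵢ εᵢ` and `Sₙ = ∑_{i<n} aᵢ²`. The truncated tail is `P(Tₙ / √Sₙ ≥ x)`,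
so by Fatou's lemma for sets it suffices that, almost surely, `a·ε ≥ x` forces `Tₙ / √Sₙ ≥ x`
for all large `n`. Since `Sₙ → 1` this is clear when `a·ε > x`, and also when `a` has finite
support, because then `Tₙ / √Sₙ` is eventually equal to `a·ε`. If `a` has infinite support,
`a·ε` has no atoms: choose indices `i₁ < ⋯ < iₖ` with `|a_{iⱼ}| > ∑_{l>j} |a_{iₗ}|` (possible as
`aᵢ → 0`). Then the `2ᵏ` sign patterns on these indices give distinct partial sums, so, the
patterns being independent of the remaining signs, `P(a·ε = x) ≤ 2⁻ᵏ`.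
-/

open MeasureTheory ProbabilityTheory Filter

/-- The standard normal tail function. -/
noncomputable def normalTail (x : ℝ) : ℝ :=
  ∫ u in Set.Ici x, (Real.sqrt (2 * Real.pi))⁻¹ * Real.exp (-u ^ 2 / 2)

/-- `ε` is a sequence of independent Rademacher random variables on `(Ω, μ)`. -/
def IsRademacherSeq {Ω : Type*} [MeasurableSpace Ω] (μ : Measure Ω) (ε : ℕ → Ω → ℝ) : Prop :=
  (∀ i, Measurable (ε i)) ∧ iIndepFun ε μ ∧
    ∀ i, μ {ω | ε i ω = 1} = 1/2 ∧ μ {ω | ε i ω = -1} = 1/2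

/-- `P(a·ε ≥ x)`, where `a·ε` is the a.s. limit of the partial sums `∑_{i<n} aᵢ εᵢ`. -/
noncomputable def tailProb {Ω : Type*} [MeasurableSpace Ω] (μ : Measure Ω) (ε : ℕ → Ω → ℝ)
    (a : ℕ → ℝ) (x : ℝ) : ℝ :=
  (μ {ω | ∃ s, x ≤ s ∧
      Tendsto (fun n => ∑ i ∈ Finset.range n, a i * ε i ω) atTop (nhds s)}).toReal

/-- `P(eₙ·ε ≥ x) = P((ε₁+⋯+εₙ)/√n ≥ x)`. -/
noncomputable def eqTail {Ω : Type*} [MeasurableSpace Ω] (μ : Measure Ω) (ε : ℕ → Ω → ℝ)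
    (n : ℕ) (x : ℝ) : ℝ :=
  (μ {ω | x ≤ (∑ i ∈ Finset.range n, ε i ω) / Real.sqrt n}).toReal

/-- `P(f_{n,t}·ε ≥ x)` where `f_{n,t}·ε = √((1-t²)/n)(ε₁+⋯+εₙ) + t ε_{n+1}`. -/
noncomputable def fTail {Ω : Type*} [MeasurableSpace Ω] (μ : Measure Ω) (ε : ℕ → Ω → ℝ)
    (n : ℕ) (t x : ℝ) : ℝ :=
  (μ {ω | x ≤ Real.sqrt ((1 - t ^ 2) / n) * (∑ i ∈ Finset.range n, ε i ω) + t * ε n ω}).toReal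

/-- The maximal tail `M(x)`: supremum of `P(a·ε ≥ x)` over the unit sphere of `ℓ²`. -/
noncomputable def Mtail {Ω : Type*} [MeasurableSpace Ω] (μ : Measure Ω) (ε : ℕ → Ω → ℝ)
    (x : ℝ) : ℝ :=
  sSup {p | ∃ a : ℕ → ℝ, (∑' i, (a i) ^ 2) = 1 ∧ p = tailProb μ ε a x}

/-- `M⁼(x) = sup_{n ≥ 1} P(eₙ·ε ≥ x)`. -/
noncomputable def Meq {Ω : Type*} [MeasurableSpace Ω] (μ : Measure Ω) (ε : ℕ → Ω → ℝ)
    (x : ℝ) : ℝ :=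
  sSup {p | ∃ n : ℕ, 1 ≤ n ∧ p = eqTail μ ε n x}

/-- `Mₙ(x)`: supremum over unit vectors supported on the first `n` coordinates. -/
noncomputable def Mn {Ω : Type*} [MeasurableSpace Ω] (μ : Measure Ω) (ε : ℕ → Ω → ℝ)
    (n : ℕ) (x : ℝ) : ℝ :=
  sSup {p | ∃ a : ℕ → ℝ, (∑' i, (a i) ^ 2) = 1 ∧ (∀ i, n ≤ i → a i = 0) ∧
    p = tailProb μ ε a x}

/-- `M⁼ₙ(x) = max_{1 ≤ j ≤ n} P(e_j·ε ≥ x)`. -/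
noncomputable def Meqn {Ω : Type*} [MeasurableSpace Ω] (μ : Measure Ω) (ε : ℕ → Ω → ℝ)
    (n : ℕ) (x : ℝ) : ℝ :=
  sSup {p | ∃ j : ℕ, 1 ≤ j ∧ j ≤ n ∧ p = eqTail μ ε j x}

open Finset

section Dominating

def IsDominating (a : ℕ → ℝ) (s : Finset ℕ) : Prop :=
  ∀ i ∈ s, ∑ l ∈ s with i < l, |a l| < |a i|

variable {a : ℕ → ℝ} {s : Finset ℕ}

theorem IsDominating.eq_zero_of_sum_mul_eq_zero (hs : IsDominating a s) {c : ℕ → ℝ}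
    (hc : ∀ i ∈ s, c i = 0 ∨ |c i| = 1) (h : ∑ i ∈ s, a i * c i = 0) : ∀ i ∈ s, c i = 0 := by
  by_contra! hne
  have hN : ({i ∈ s | c i ≠ 0} : Finset ℕ).Nonempty := by
    obtain ⟨i, hi, hci⟩ := hne
    exact ⟨i, mem_filter.2 ⟨hi, hci⟩⟩
  set i := ({i ∈ s | c i ≠ 0} : Finset ℕ).min' hN
  obtain ⟨his, hci⟩ := mem_filter.1 (min'_mem _ hN)
  have hbelow : ∀ l ∈ s, l < i → c l = 0 := fun l hl hli => by
    by_contra hcl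
    exact (min'_le _ l (mem_filter.2 ⟨hl, hcl⟩)).not_gt hli
  rw [← sum_filter_add_sum_filter_not s (i < ·), sum_eq_single_of_mem (s := {l ∈ s | ¬ i < l}) i
    (mem_filter.2 ⟨his, lt_irrefl i⟩) fun l hl hli => by
      rw [hbelow l (mem_filter.1 hl).1 ((not_lt.1 (mem_filter.1 hl).2).lt_of_ne hli), mul_zero]]
    at h
  have : |a i| ≤ ∑ l ∈ s with i < l, |a l| := calc
    |a i| = |a i * c i| := by rw [abs_mul, (hc i his).resolve_left hci, mul_one]
    _ = |∑ l ∈ s with i < l, a l * c l| := by rw [← abs_neg]; congr 1; linarith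
    _ ≤ ∑ l ∈ s with i < l, |a l * c l| := abs_sum_le_sum_abs _ _
    _ ≤ ∑ l ∈ s with i < l, |a l| := sum_le_sum fun l hl => by
      rw [abs_mul]
      rcases hc l (mem_filter.1 hl).1 with h | h <;> simp [h]
  exact (hs i his).not_ge this

theorem IsDominating.injOn_sum (hs : IsDominating a s) :
    Set.InjOn (fun t => ∑ i ∈ t, a i) (s.powerset : Set (Finset ℕ)) := by
  intro t ht t' ht' h
  simp only [coe_powerset, Set.mem_preimage, Set.mem_powerset_iff, coe_subset] at ht ht'
  have hdiff : ∑ i ∈ s, a i * ((if i ∈ t then 1 else 0) - (if i ∈ t' then 1 else 0)) = 0 := by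
    simp only [mul_sub, mul_ite, mul_one, mul_zero, sum_sub_distrib, sum_ite_mem,
      inter_eq_right.2 ht, inter_eq_right.2 ht']
    exact sub_eq_zero.2 h
  have hzero := hs.eq_zero_of_sum_mul_eq_zero (fun i _ => by split_ifs <;> norm_num) hdiff
  ext i
  constructor <;> intro hi
  · by_contra hi'
    simpa [hi, hi'] using hzero i (ht hi)
  · by_contra hi'
    simpa [hi, hi'] using hzero i (ht' hi)

theorem exists_isDominating (h0 : Tendsto a atTop (nhds 0)) (hinf : {i | a i ≠ 0}.Infinite)
    (k : ℕ) : ∃ s : Finset ℕ, s.card = k ∧ IsDominating a s := by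
  induction k with
  | zero => exact ⟨∅, rfl, by simp [IsDominating]⟩
  | succ k ih =>
    obtain ⟨s, hcard, hs⟩ := ih
    have hsmall : ∀ᶠ n in atTop, ∀ i ∈ s, i < n ∧ ∑ l ∈ s with i < l, |a l| + |a n| < |a i| :=
      (eventually_all_finset s).2 fun i hi => (eventually_gt_atTop i).and <|
        (h0.abs.const_add _).eventually_lt_const (by simpa using hs i hi)
    obtain ⟨n, hn, han⟩ :=
      (hsmall.and_frequently (Nat.frequently_atTop_iff_infinite.2 hinf)).exists
    have hns : n ∉ s := fun h => (hn n h).1.false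
    refine ⟨insert n s, by rw [card_insert_of_notMem hns, hcard], fun i hi => ?_⟩
    rcases mem_insert.1 hi with rfl | hi
    · have hempty : ({l ∈ insert i s | i < l} : Finset ℕ) = ∅ :=
        filter_eq_empty_iff.2 fun l hl hil =>
          (mem_insert.1 hl).elim hil.ne' fun hl => (hn l hl).1.not_gt hil
      simpa [hempty] using han
    · rw [filter_insert, if_pos (hn i hi).1, sum_insert fun h => hns (mem_filter.1 h).1]
      linarith [(hn i hi).2]

end Dominating

theorem toReal_measure_setOf_eventually_mem_le_liminf {Ω : Type*} [MeasurableSpace Ω]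
    (μ : Measure Ω) [IsFiniteMeasure μ] (B : ℕ → Set Ω) :
    (μ {ω | ∀ᶠ n in atTop, ω ∈ B n}).toReal ≤ liminf (fun n => (μ (B n)).toReal) atTop := by
  rw [ENNReal.liminf_toReal_eq (measure_ne_top μ Set.univ)
    (Eventually.of_forall fun n => measure_mono (Set.subset_univ _))]
  refine ENNReal.toReal_mono (ne_top_of_le_ne_top (measure_ne_top μ Set.univ)
    (liminf_le_of_le ⟨0, by simp⟩ fun b hb => ?_)) ?_
  · obtain ⟨n, hn⟩ := hb.exists
    exact hn.trans (measure_mono (Set.subset_univ _))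
  have hunion : {ω | ∀ᶠ n in atTop, ω ∈ B n} = ⋃ N, ⋂ n ≥ N, B n := by
    ext ω; simp [eventually_atTop]
  have hmono : Monotone fun N => ⋂ n ≥ N, B n := fun N M h =>
    Set.biInter_mono (fun n hn => h.trans hn) fun _ _ => le_rfl
  rw [hunion, hmono.measure_iUnion, liminf_eq_iSup_iInf_of_nat]
  exact iSup_mono fun N => le_iInf₂ fun n hn => measure_mono (Set.biInter_subset_of_mem hn)

theorem measure_biUnion_inter_le_of_indep {Ω ι : Type*} {m₁ m₂ mΩ : MeasurableSpace Ω}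
    {μ : Measure Ω} [IsProbabilityMeasure μ] (hm₂ : m₂ ≤ mΩ) (hind : Indep m₁ m₂ μ)
    {I : Finset ι} {A D : ι → Set Ω} {p : ENNReal}
    (hA : ∀ i ∈ I, MeasurableSet[m₁] (A i)) (hAp : ∀ i ∈ I, μ (A i) ≤ p)
    (hD : ∀ i ∈ I, MeasurableSet[m₂] (D i)) (hdisj : (I : Set ι).PairwiseDisjoint D) :
    μ (⋃ i ∈ I, A i ∩ D i) ≤ p := calc
  μ (⋃ i ∈ I, A i ∩ D i) ≤ ∑ i ∈ I, μ (A i ∩ D i) := measure_biUnion_finset_le I _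
  _ = ∑ i ∈ I, μ (A i) * μ (D i) :=
    sum_congr rfl fun i hi => (Indep_iff m₁ m₂ μ).1 hind _ _ (hA i hi) (hD i hi)
  _ ≤ ∑ i ∈ I, p * μ (D i) := sum_le_sum fun i hi => mul_le_mul_left (hAp i hi) _
  _ = p * μ (⋃ i ∈ I, D i) := by
    rw [← mul_sum, measure_biUnion_finset hdisj fun i hi => hm₂ _ (hD i hi)]
  _ ≤ p := mul_le_of_le_one_right' prob_le_one

section TailProb

variable {Ω : Type*} [MeasurableSpace Ω] (μ : Measure Ω) (ε : ℕ → Ω → ℝ)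

theorem tailProb_eq_of_forall_ge_eq_zero {b : ℕ → ℝ} {n : ℕ} (hb : ∀ i ≥ n, b i = 0) (x : ℝ) :
    tailProb μ ε b x = (μ {ω | x ≤ ∑ i ∈ range n, b i * ε i ω}).toReal := by
  have hlim (ω) : Tendsto (fun m => ∑ i ∈ range m, b i * ε i ω) atTop
      (nhds (∑ i ∈ range n, b i * ε i ω)) :=
    tendsto_atTop_of_eventually_const fun m hm =>
      eventually_constant_sum (fun i hi => by rw [hb i hi, zero_mul]) hm
  unfold tailProb
  congr; ext ω
  exact ⟨fun ⟨s, hxs, hs⟩ => tendsto_nhds_unique hs (hlim ω) ▸ hxs, fun h => ⟨_, h, hlim ω⟩⟩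

theorem tailProb_truncate_normalize (a : ℕ → ℝ) (n : ℕ) (x : ℝ) :
    tailProb μ ε
        (fun i => (if i < n then a i else 0) / Real.sqrt (∑ j ∈ range n, a j ^ 2)) x
      = (μ {ω | x ≤ (∑ i ∈ range n, a i * ε i ω) / Real.sqrt (∑ j ∈ range n, a j ^ 2)}).toReal := by
  rw [tailProb_eq_of_forall_ge_eq_zero μ ε (n := n) fun i hi => by simp [not_lt.2 hi]]
  congr; ext ω
  rw [sum_div]
  refine Iff.of_eq (congrArg _ (sum_congr rfl fun i hi => ?_))
  rw [if_pos (mem_range.1 hi), div_mul_eq_mul_div]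

end TailProb

namespace IsRademacherSeq

variable {Ω : Type*} {mΩ : MeasurableSpace Ω} {μ : Measure Ω} {ε : ℕ → Ω → ℝ}

theorem ae_eq_one_or_eq_neg_one [IsProbabilityMeasure μ] (hε : IsRademacherSeq μ ε) :
    ∀ᵐ ω ∂μ, ∀ i, ε i ω = 1 ∨ ε i ω = -1 := by
  refine ae_all_iff.2 fun i => ?_
  have hmeas (c : ℝ) : MeasurableSet {ω | ε i ω = c} := hε.1 i (measurableSet_singleton c)
  have hdisj : Disjoint {ω | ε i ω = 1} {ω | ε i ω = -1} :=
    Set.disjoint_left.2 fun ω (h1 : ε i ω = 1) (h2 : ε i ω = -1) => by norm_num [h1] at h2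
  rw [ae_iff_measure_eq, Set.ofPred_or, measure_union hdisj (hmeas _), (hε.2.2 i).1,
    (hε.2.2 i).2, ENNReal.add_halves, measure_univ]
  exact ((hmeas _).union (hmeas _)).nullMeasurableSet

theorem measure_forall_mem_eq_ite (hε : IsRademacherSeq μ ε) (s t : Finset ℕ) :
    μ {ω | ∀ i ∈ s, ε i ω = if i ∈ t then 1 else -1} = 2⁻¹ ^ s.card := by
  have hset : {ω | ∀ i ∈ s, ε i ω = if i ∈ t then 1 else -1} =
      ⋂ i ∈ s, ε i ⁻¹' {if i ∈ t then 1 else -1} := by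
    ext ω; simp
  rw [hset, hε.2.1.measure_inter_preimage_eq_mul _ fun i _ => measurableSet_singleton _,
    prod_congr rfl fun i _ => ?_, prod_const]
  split_ifs
  · simpa [Set.preimage, one_div] using (hε.2.2 i).1
  · simpa [Set.preimage, one_div] using (hε.2.2 i).2

theorem measure_tendsto_le_of_isDominating [IsProbabilityMeasure μ] (hε : IsRademacherSeq μ ε)
    {a : ℕ → ℝ} {s : Finset ℕ} (hs : IsDominating a s) (y : ℝ) :
    μ {ω | Tendsto (fun n => ∑ i ∈ range n, a i * ε i ω) atTop (nhds y)} ≤ 2⁻¹ ^ s.card := by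
  let m₁ := ⨆ i ∈ (s : Set ℕ), MeasurableSpace.comap (ε i) Real.measurableSpace
  let m₂ := ⨆ i ∈ (s : Set ℕ)ᶜ, MeasurableSpace.comap (ε i) Real.measurableSpace
  have hind : Indep m₁ m₂ μ :=
    indep_biSup_compl (fun i => (hε.1 i).comap_le) hε.2.1.iIndep s
  have hm₂ : m₂ ≤ mΩ := iSup₂_le fun i _ => (hε.1 i).comap_le
  have hε₁ (i) (hi : i ∈ s) : Measurable[m₁] (ε i) :=
    measurable_iff_comap_le.2 (le_iSup₂ (f := fun i (_ : i ∈ (s : Set ℕ)) =>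
      MeasurableSpace.comap (ε i) Real.measurableSpace) i hi)
  have hε₂ (i) (hi : i ∉ s) : Measurable[m₂] (ε i) :=
    measurable_iff_comap_le.2 (le_iSup₂ (f := fun i (_ : i ∈ (s : Set ℕ)ᶜ) =>
      MeasurableSpace.comap (ε i) Real.measurableSpace) i hi)
  -- On `A t` the signs on `s` are `+1` exactly on `t`; on `D t` the terms outside `s` converge
  -- to the value that then makes the whole series converge to `y`.
  let A (t : Finset ℕ) := {ω | ∀ i ∈ s, ε i ω = if i ∈ t then 1 else -1}
  let D (t : Finset ℕ) := {ω | Tendsto (fun n => ∑ i ∈ range n \ s, a i * ε i ω) atTop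
    (nhds (y - (2 * ∑ i ∈ t, a i - ∑ i ∈ s, a i)))}
  have hA (t) : MeasurableSet[m₁] (A t) := by
    simp only [A, Set.ofPred_forall]
    exact .biInter s.countable_toSet fun i hi => hε₁ i hi (measurableSet_singleton _)
  have hD (t) : MeasurableSet[m₂] (D t) :=
    measurableSet_tendsto _ fun n => measurable_sum _ fun i hi =>
      (hε₂ i (mem_sdiff.1 hi).2).const_mul _
  have hdisj : (s.powerset : Set (Finset ℕ)).PairwiseDisjoint D := by
    intro t ht t' ht' hne
    refine Set.disjoint_left.2 fun ω h h' => hne (hs.injOn_sum ht ht' ?_)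
    linarith [tendsto_nhds_unique h h']
  have hcover : {ω | Tendsto (fun n => ∑ i ∈ range n, a i * ε i ω) atTop (nhds y)}
      ≤ᵐ[μ] ⋃ t ∈ s.powerset, A t ∩ D t := by
    filter_upwards [hε.ae_eq_one_or_eq_neg_one] with ω hω hy
    let t := {i ∈ s | ε i ω = 1}
    have hsign : ∀ i ∈ s, ε i ω = if i ∈ t then 1 else -1 := fun i hi => by
      by_cases h : ε i ω = 1
      · simp [t, hi, h]
      · simpa [t, hi, h] using (hω i).resolve_left h
    have hsum : ∑ i ∈ s, a i * ε i ω = 2 * ∑ i ∈ t, a i - ∑ i ∈ s, a i := by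
      rw [sum_congr rfl fun i hi => by
        rw [hsign i hi, show a i * (if i ∈ t then 1 else -1) = 2 * (if i ∈ t then a i else 0) - a i
          by split_ifs <;> ring],
        sum_sub_distrib, ← mul_sum, sum_ite_mem, inter_eq_right.2 (filter_subset _ _)]
    refine Set.mem_biUnion (mem_powerset.2 (filter_subset _ s)) ⟨hsign, ?_⟩
    show Tendsto _ _ _
    rw [← hsum]
    refine (hy.sub_const _).congr' ?_
    filter_upwards [(eventually_all_finset s).2 fun i _ => eventually_gt_atTop i] with n hn
    rw [← sum_sdiff fun i hi => mem_range.2 (hn i hi), add_sub_cancel_right]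
  calc _ ≤ μ (⋃ t ∈ s.powerset, A t ∩ D t) := measure_mono_ae hcover
    _ ≤ 2⁻¹ ^ s.card := measure_biUnion_inter_le_of_indep hm₂ hind (fun t _ => hA t)
        (fun t _ => (hε.measure_forall_mem_eq_ite s t).le) (fun t _ => hD t) hdisj

theorem measure_tendsto_eq_zero [IsProbabilityMeasure μ] (hε : IsRademacherSeq μ ε)
    {a : ℕ → ℝ} (h0 : Tendsto a atTop (nhds 0)) (hinf : {i | a i ≠ 0}.Infinite) (y : ℝ) :
    μ {ω | Tendsto (fun n => ∑ i ∈ range n, a i * ε i ω) atTop (nhds y)} = 0 := by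
  refine le_antisymm (ge_of_tendsto' (ENNReal.tendsto_pow_atTop_nhds_zero_of_lt_one
    (ENNReal.inv_lt_one.2 ENNReal.one_lt_two)) fun k => ?_) zero_le
  obtain ⟨s, rfl, hs⟩ := exists_isDominating h0 hinf k
  exact hε.measure_tendsto_le_of_isDominating hs y

theorem ae_eventually_le_div_sqrt [IsProbabilityMeasure μ] (hε : IsRademacherSeq μ ε)
    {a : ℕ → ℝ} (ha : ∑' i, a i ^ 2 = 1) (x : ℝ) :
    ∀ᵐ ω ∂μ, ∀ s, x ≤ s → Tendsto (fun n => ∑ i ∈ range n, a i * ε i ω) atTop (nhds s) →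
      ∀ᶠ n in atTop, x ≤ (∑ i ∈ range n, a i * ε i ω) / Real.sqrt (∑ j ∈ range n, a j ^ 2) := by
  have hsum : Summable fun i => a i ^ 2 := by
    by_contra h
    simp [tsum_eq_zero_of_not_summable h] at ha
  by_cases hfin : {i | a i ≠ 0}.Finite
  · obtain ⟨N, hN⟩ := hfin.bddAbove
    have hzero : ∀ i ≥ N + 1, a i = 0 := fun i hi => by
      by_contra h
      exact (hN h).not_gt hi
    refine Eventually.of_forall fun ω s hxs hs => ?_
    have hT : ∀ n ≥ N + 1, ∑ i ∈ range n, a i * ε i ω = ∑ i ∈ range (N + 1), a i * ε i ω :=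
      fun n => eventually_constant_sum fun i hi => by rw [hzero i hi, zero_mul]
    have hS : ∀ n ≥ N + 1, ∑ j ∈ range n, a j ^ 2 = 1 := fun n hn => by
      rw [eventually_constant_sum (fun i hi => by rw [hzero i hi, sq, zero_mul]) hn, ← ha,
        tsum_eq_sum fun i hi => by rw [hzero i (not_lt.1 (mem_range.not.1 hi)), sq, zero_mul]]
    have hlim := tendsto_nhds_unique hs (tendsto_atTop_of_eventually_const hT)
    filter_upwards [eventually_ge_atTop (N + 1)] with n hn
    rwa [hT n hn, hS n hn, Real.sqrt_one, div_one, ← hlim]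
  · have h0 : Tendsto a atTop (nhds 0) := by
      refine (tendsto_zero_iff_abs_tendsto_zero a).2 ?_
      simpa [Function.comp_def, Real.sqrt_sq_eq_abs] using hsum.tendsto_atTop_zero.sqrt
    filter_upwards [measure_eq_zero_iff_ae_notMem.1 (hε.measure_tendsto_eq_zero h0 hfin x)]
      with ω hω s hxs hs
    have hS : Tendsto (fun n => Real.sqrt (∑ j ∈ range n, a j ^ 2)) atTop (nhds 1) := by
      simpa [ha] using hsum.hasSum.tendsto_sum_nat.sqrt
    exact (div_one s ▸ hs.div hS one_ne_zero).eventually_const_le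
      (hxs.lt_of_ne fun h => hω (h ▸ hs))

end IsRademacherSeq

theorem rademacher_truncation_liminf {Ω : Type*} [MeasurableSpace Ω] (μ : MeasureTheory.Measure Ω)
    [MeasureTheory.IsProbabilityMeasure μ] (ε : ℕ → Ω → ℝ) (hε : IsRademacherSeq μ ε)
    (x : ℝ) (a : ℕ → ℝ) (ha : (∑' i, (a i) ^ 2) = 1) :
    tailProb μ ε a x ≤
      Filter.liminf (fun n =>
        tailProb μ ε
          (fun i => (if i < n then a i else 0) / Real.sqrt (∑ j ∈ Finset.range n, (a j) ^ 2)) x)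
        Filter.atTop := by
  simp only [tailProb_truncate_normalize]
  refine le_trans ?_ (toReal_measure_setOf_eventually_mem_le_liminf μ _)
  refine ENNReal.toReal_mono (measure_ne_top _ _) (measure_mono_ae ?_)
  filter_upwards [hε.ae_eventually_le_div_sqrt ha x] with ω hω ⟨s, hxs, hs⟩
  exact hω s hxs hs
end

section
/- For all natural n ≥ 16, (n+1)/2^{n+1} < Φ̄(xₙ), where xₙ := √(n - 3 + 4/n) and Φ̄ is the standard normal tail function. -/
/-!
Mills' lower bound `Φ̄(x) ≥ φ(x) (1/x - 1/x³)` comes from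
`e^{-(x+t)²/2} ≥ e^{-x²/2} e^{-xt} (1 - t²/2)` integrated over `t ∈ [0, 2]`: the right-hand
side has an explicit antiderivative, whose value at `t = 2` is positive. For `x = xₙ`,
squaring turns the claim into `2π (n+1)² s³ eˢ < 4ⁿ⁺¹ (s-1)²` with `s = xₙ² ≤ n - 11/4`.
With `eˢ` replaced by `e^{n - 11/4}` this is checked numerically at `n = 16`, and the ratio
of consecutive terms is controlled by a polynomial inequality valid for `n ≥ 16`.
-/

open MeasureTheory ProbabilityTheory Filter

open Real

lemma hasDerivAt_antideriv_exp_neg_mul_one_sub_sq (x t : ℝ) (hx : x ≠ 0) :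
    HasDerivAt (fun t ↦ exp (-x * t) * (t ^ 2 / (2 * x) + t / x ^ 2 + 1 / x ^ 3 - 1 / x))
      (exp (-x * t) * (1 - t ^ 2 / 2)) t := by
  have hp : HasDerivAt (fun t ↦ t ^ 2 / (2 * x) + t / x ^ 2 + 1 / x ^ 3 - 1 / x)
      (t / x + 1 / x ^ 2) t :=
    ((((hasDerivAt_pow 2 t).div_const (2 * x)).add ((hasDerivAt_id' t).div_const (x ^ 2))).add_const
      (1 / x ^ 3)).sub_const (1 / x) |>.congr_deriv (by field_simp; ring)
  refine (((hasDerivAt_id' t).const_mul (-x)).exp.mul hp).congr_deriv ?_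
  field_simp
  ring

lemma sq_sub_one_div_cube_le_integral {x : ℝ} (hx : 0 < x) :
    (x ^ 2 - 1) / x ^ 3 ≤ ∫ t in (0 : ℝ)..2, exp (-x * t) * (1 - t ^ 2 / 2) := by
  rw [intervalIntegral.integral_eq_sub_of_hasDerivAt
    (fun t _ ↦ hasDerivAt_antideriv_exp_neg_mul_one_sub_sq x t hx.ne')
    ((by fun_prop : Continuous _).intervalIntegrable _ _)]
  have h2 : (2 : ℝ) ^ 2 / (2 * x) + 2 / x ^ 2 + 1 / x ^ 3 - 1 / x =
      1 / x + 2 / x ^ 2 + 1 / x ^ 3 := by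
    ring
  have h0 : exp (-x * 0) * ((0 : ℝ) ^ 2 / (2 * x) + 0 / x ^ 2 + 1 / x ^ 3 - 1 / x) =
      -((x ^ 2 - 1) / x ^ 3) := by
    rw [mul_zero, exp_zero, one_mul]
    field_simp
    ring
  rw [h2, h0]
  linarith [show 0 ≤ exp (-x * 2) * (1 / x + 2 / x ^ 2 + 1 / x ^ 3) by positivity]

lemma inv_sqrt_two_pi_mul_integral_le_normalTail (x : ℝ) :
    (√(2 * π))⁻¹ * ∫ t in (0 : ℝ)..2, exp (-(x + t) ^ 2 / 2) ≤ normalTail x := by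
  have hint : Integrable (fun u : ℝ ↦ exp (-u ^ 2 / 2)) := by
    simpa [neg_div, div_eq_inv_mul] using integrable_exp_neg_mul_sq (b := 1 / 2) (by norm_num)
  rw [intervalIntegral.integral_comp_add_left (fun u ↦ exp (-u ^ 2 / 2)), add_zero,
    intervalIntegral.integral_of_le (by linarith), normalTail, integral_const_mul]
  refine mul_le_mul_of_nonneg_left ?_ (by positivity)
  exact setIntegral_mono_set hint.integrableOn (.of_forall fun _ ↦ (exp_pos _).le)
    (Set.Ioc_subset_Ioi_self.trans Set.Ioi_subset_Ici_self).eventuallyLE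

theorem mills_lower_bound {x : ℝ} (hx : 0 < x) :
    (x ^ 2 - 1) / (√(2 * π) * x ^ 3 * exp (x ^ 2 / 2)) ≤ normalTail x := by
  have hpt (t : ℝ) :
      exp (-x ^ 2 / 2) * (exp (-x * t) * (1 - t ^ 2 / 2)) ≤ exp (-(x + t) ^ 2 / 2) := by
    have : exp (-(x + t) ^ 2 / 2) = exp (-x ^ 2 / 2) * (exp (-x * t) * exp (-t ^ 2 / 2)) := by
      rw [← exp_add, ← exp_add]; congr 1; ring
    rw [this]
    gcongr
    linarith [add_one_le_exp (-t ^ 2 / 2)]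
  calc (x ^ 2 - 1) / (√(2 * π) * x ^ 3 * exp (x ^ 2 / 2))
      = (√(2 * π))⁻¹ * (exp (-x ^ 2 / 2) * ((x ^ 2 - 1) / x ^ 3)) := by
        rw [neg_div, exp_neg]; field_simp
    _ ≤ (√(2 * π))⁻¹ *
          (exp (-x ^ 2 / 2) * ∫ t in (0 : ℝ)..2, exp (-x * t) * (1 - t ^ 2 / 2)) := by
        gcongr; exact sq_sub_one_div_cube_le_integral hx
    _ ≤ (√(2 * π))⁻¹ * ∫ t in (0 : ℝ)..2, exp (-(x + t) ^ 2 / 2) := by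
        rw [← intervalIntegral.integral_const_mul]
        gcongr
        exact intervalIntegral.integral_mono_on (by norm_num)
          ((by fun_prop : Continuous _).intervalIntegrable _ _)
          ((by fun_prop : Continuous _).intervalIntegrable _ _)
          fun t _ ↦ hpt t
    _ ≤ normalTail x := inv_sqrt_two_pi_mul_integral_le_normalTail x

lemma lt_normalTail_sqrt {a s : ℝ} (hs : 1 < s)
    (h : 2 * π * a ^ 2 * s ^ 3 * exp s < (s - 1) ^ 2) : a < normalTail √s := by
  refine lt_of_lt_of_le ?_ (mills_lower_bound (sqrt_pos.2 (by linarith)))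
  rw [sq_sqrt (by linarith)]
  refine lt_of_pow_lt_pow_left₀ 2 (by positivity) ?_
  have hsq : ((s - 1) / (√(2 * π) * √s ^ 3 * exp (s / 2))) ^ 2 =
      (s - 1) ^ 2 / (2 * π * s ^ 3 * exp s) := by
    rw [div_pow, mul_pow, mul_pow, sq_sqrt (by positivity), ← pow_mul, mul_comm 3 2, pow_mul,
      sq_sqrt (by linarith), ← exp_nat_mul]
    norm_num [mul_div_cancel₀]
  have : 0 < s := by linarith
  rw [hsq, lt_div_iff₀ (by positivity)]
  linarith

noncomputable def zhubrSq (x : ℝ) : ℝ := x - 3 + 4 / x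

lemma sub_three_le_zhubrSq {x : ℝ} (hx : 0 < x) : x - 3 ≤ zhubrSq x := by
  unfold zhubrSq; linarith [div_pos four_pos hx]

lemma zhubrSq_le_sub_eleven_div_four {x : ℝ} (hx : 16 ≤ x) : zhubrSq x ≤ x - 11 / 4 := by
  unfold zhubrSq
  linarith [(div_le_iff₀ (by linarith : (0 : ℝ) < x)).2 (by linarith : 4 ≤ 1 / 4 * x)]

lemma zhubrSq_step_polynomial_le {x : ℝ} (hx : 16 ≤ x) :
    (x - 15 / 4) ^ 2 * 2.72 * (x + 2) ^ 2 * (x - 7 / 4) ^ 3 ≤ 4 * (x + 1) ^ 2 * (x - 3) ^ 5 := by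
  have hm : 0 ≤ x - 16 := by linarith
  nlinarith [pow_nonneg hm 7, pow_nonneg hm 6, pow_nonneg hm 5, pow_nonneg hm 4,
    pow_nonneg hm 3, pow_nonneg hm 2]

lemma zhubrSq_step_le {x : ℝ} (hx : 16 ≤ x) :
    (zhubrSq x - 1) ^ 2 * exp 1 * (x + 2) ^ 2 * zhubrSq (x + 1) ^ 3 ≤
      4 * (x + 1) ^ 2 * (zhubrSq (x + 1) - 1) ^ 2 * zhubrSq x ^ 3 := by
  have h₁ := sub_three_le_zhubrSq (x := x) (by linarith)
  have h₂ := zhubrSq_le_sub_eleven_div_four hx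
  have h₃ := sub_three_le_zhubrSq (x := x + 1) (by linarith)
  have h₄ := zhubrSq_le_sub_eleven_div_four (x := x + 1) (by linarith)
  have he : exp 1 ≤ 2.72 := by linarith [exp_one_lt_d9]
  calc (zhubrSq x - 1) ^ 2 * exp 1 * (x + 2) ^ 2 * zhubrSq (x + 1) ^ 3
      ≤ (x - 15 / 4) ^ 2 * 2.72 * (x + 2) ^ 2 * (x - 7 / 4) ^ 3 := by
        gcongr ?_ ^ 2 * ?_ * _ * ?_ ^ 3 <;>
          first | linarith | exact pow_nonneg (by linarith) 3
    _ ≤ 4 * (x + 1) ^ 2 * (x - 3) ^ 5 := zhubrSq_step_polynomial_le hx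
    _ = 4 * (x + 1) ^ 2 * (x - 3) ^ 2 * (x - 3) ^ 3 := by ring
    _ ≤ 4 * (x + 1) ^ 2 * (zhubrSq (x + 1) - 1) ^ 2 * zhubrSq x ^ 3 := by
        gcongr 4 * _ * ?_ ^ 2 * ?_ ^ 3 <;>
          first | linarith | exact pow_nonneg (by linarith) 3

lemma exp_53_div_4_lt : exp (53 / 4) < 600000 := by
  have h : exp 53 < 600000 ^ 4 := by
    rw [show (53 : ℝ) = (53 : ℕ) * 1 by norm_num, exp_nat_mul]
    calc exp 1 ^ 53 < 2.7182818286 ^ 53 := by gcongr; exact exp_one_lt_d9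
      _ < 600000 ^ 4 := by norm_num
  refine lt_of_pow_lt_pow_left₀ 4 (by norm_num) ?_
  rwa [← exp_nat_mul, show ((4 : ℕ) : ℝ) * (53 / 4) = 53 by norm_num]

lemma two_pi_mul_zhubrSq_pow_mul_exp_lt (n : ℕ) (hn : 16 ≤ n) :
    2 * π * ((n : ℝ) + 1) ^ 2 * zhubrSq n ^ 3 * exp (n - 11 / 4) <
      4 ^ (n + 1) * (zhubrSq n - 1) ^ 2 := by
  induction n, hn using Nat.le_induction with
  | base =>
    have hs : zhubrSq 16 = 53 / 4 := by norm_num [zhubrSq]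
    push_cast
    rw [hs, show (16 : ℝ) - 11 / 4 = 53 / 4 by norm_num]
    calc 2 * π * (16 + 1) ^ 2 * (53 / 4) ^ 3 * exp (53 / 4)
        < 2 * 3.1416 * (16 + 1) ^ 2 * (53 / 4) ^ 3 * 600000 := by
          gcongr
          · exact pi_lt_d4
          · exact exp_53_div_4_lt
      _ < 4 ^ (16 + 1) * (53 / 4 - 1) ^ 2 := by norm_num
  | succ n hn ih =>
    have hx : (16 : ℝ) ≤ n := by exact_mod_cast hn
    have hs' : 0 < zhubrSq (n + 1) - 1 := by
      linarith [sub_three_le_zhubrSq (x := n + 1) (by linarith)]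
    have hexp : exp ((n + 1 : ℕ) - 11 / 4 : ℝ) = exp (n - 11 / 4) * exp 1 := by
      rw [← exp_add]; push_cast; ring_nf
    rw [hexp]
    push_cast
    set s := zhubrSq n
    set s' := zhubrSq (n + 1)
    set E := exp (n - 11 / 4)
    refine lt_of_mul_lt_mul_right ?_ (sq_nonneg (s - 1))
    calc 2 * π * (n + 1 + 1) ^ 2 * s' ^ 3 * (E * exp 1) * (s - 1) ^ 2
        = 2 * π * E * ((s - 1) ^ 2 * exp 1 * (n + 2) ^ 2 * s' ^ 3) := by ring
      _ ≤ 2 * π * E * (4 * (n + 1) ^ 2 * (s' - 1) ^ 2 * s ^ 3) := by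
          exact mul_le_mul_of_nonneg_left (zhubrSq_step_le hx) (by positivity)
      _ = 4 * (s' - 1) ^ 2 * (2 * π * (n + 1) ^ 2 * s ^ 3 * E) := by ring
      _ < 4 * (s' - 1) ^ 2 * (4 ^ (n + 1) * (s - 1) ^ 2) := by gcongr
      _ = 4 ^ (n + 1 + 1) * (s' - 1) ^ 2 * (s - 1) ^ 2 := by ring

theorem zhubr_lt_normalTail (n : ℕ) (hn : 16 ≤ n) :
    ((n : ℝ) + 1) / 2 ^ (n + 1) < normalTail (Real.sqrt ((n : ℝ) - 3 + 4 / n)) := by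
  have hx : (16 : ℝ) ≤ n := by exact_mod_cast hn
  have hs : 1 < zhubrSq n := by linarith [sub_three_le_zhubrSq (x := n) (by linarith)]
  have h4 : ((2 : ℝ) ^ (n + 1)) ^ 2 = 4 ^ (n + 1) := by
    rw [← pow_mul, mul_comm, pow_mul]; norm_num
  refine lt_normalTail_sqrt hs ?_
  calc 2 * π * (((n : ℝ) + 1) / 2 ^ (n + 1)) ^ 2 * zhubrSq n ^ 3 * exp (zhubrSq n)
      ≤ 2 * π * (((n : ℝ) + 1) / 2 ^ (n + 1)) ^ 2 * zhubrSq n ^ 3 * exp (n - 11 / 4) := by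
        have : 0 < zhubrSq n := by linarith
        gcongr
        exact zhubrSq_le_sub_eleven_div_four hx
    _ = 2 * π * ((n : ℝ) + 1) ^ 2 * zhubrSq n ^ 3 * exp (n - 11 / 4) / 4 ^ (n + 1) := by
        rw [div_pow, h4]; ring
    _ < (zhubrSq n - 1) ^ 2 := by
        rw [div_lt_iff₀ (by positivity)]
        linarith [two_pi_mul_zhubrSq_pow_mul_exp_lt n hn]
end
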